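/- arXiv:1005.2104 — 2 statements merged into one kernel-verified Lean document; each statement's English description precedes it below -/
import Mathlib

section
/- For every real k, J⁰(k) equals the sum of the everywhere-convergent power series Σ_{j=0}^∞ (−1)^j · k^{2j} / (2^{2j} · (j!)²). -/
open MeasureTheory Real

/-- The zeroth-order Bessel function `J⁰(k) = (1/π) ∫₀^π cos(k cos θ) dθ`. -/
noncomputable def J0 (k : ℝ) : ℝ :=
  (1 / Real.pi) * ∫ θ in (0:ℝ)..Real.pi, Real.cos (k * Real.cos θ)

/-!
Expand `cos (k cos θ) = ∑ (-1)^j (k cos θ)^(2j) / (2j)!` and integrate term by term, which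
dominated convergence allows since the terms are bounded by those of `cosh k`. What remains are
the Wallis integrals `∫₀^π cos^(2j) θ dθ = π (2j)! / (2^(2j) (j!)²)`.
-/

open Nat Interval

theorem integral_cos_pow_two_mul (n : ℕ) :
    ∫ x in (0:ℝ)..π, cos x ^ (2 * n) = π * (2 * n)! / (2 ^ (2 * n) * (n ! : ℝ) ^ 2) := by
  induction n with
  | zero => simp
  | succ n ih =>
    rw [show 2 * (n + 1) = 2 * n + 2 by ring, integral_cos_pow, ih,
      Nat.factorial_succ (2 * n + 1), Nat.factorial_succ (2 * n), Nat.factorial_succ n]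
    simp only [sin_pi, sin_zero, mul_zero, sub_zero, zero_div, zero_add]
    push_cast
    field_simp
    ring

theorem hasSum_intervalIntegral_cos_mul {f : ℝ → ℝ} {a b C : ℝ}
    (hf : AEStronglyMeasurable f (volume.restrict (Ι a b))) (hC : ∀ x ∈ Ι a b, |f x| ≤ C)
    (k : ℝ) :
    HasSum (fun j : ℕ => (-1) ^ j * k ^ (2 * j) / (2 * j)! * ∫ x in a..b, f x ^ (2 * j))
      (∫ x in a..b, cos (k * f x)) := by
  have hterm (j : ℕ) :
      (-1) ^ j * k ^ (2 * j) / (2 * j)! * ∫ x in a..b, f x ^ (2 * j)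
        = ∫ x in a..b, (-1) ^ j * (k * f x) ^ (2 * j) / (2 * j)! := by
    rw [← intervalIntegral.integral_const_mul]
    congr 1 with x
    ring
  simp only [hterm]
  refine intervalIntegral.hasSum_integral_of_dominated_convergence
    (fun j _ => (k * C) ^ (2 * j) / (2 * j)!) (fun j => ?_) (fun j => ?_)
    (.of_forall fun _ _ => (hasSum_cosh (k * C)).summable) intervalIntegrable_const
    (.of_forall fun x _ => hasSum_cos (k * f x))
  · fun_prop
  · refine .of_forall fun x hx => ?_
    have hkf : |k * f x| ≤ |k * C| := by
      rw [abs_mul, abs_mul]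
      exact mul_le_mul_of_nonneg_left ((hC x hx).trans (le_abs_self C)) (abs_nonneg k)
    rw [norm_div, norm_mul, norm_pow, norm_neg, norm_one, one_pow, one_mul, norm_pow,
      Real.norm_eq_abs, RCLike.norm_natCast, ← (even_two_mul j).pow_abs (k * C)]
    gcongr

theorem J0_power_series (k : ℝ) :
    HasSum (fun j : ℕ =>
      (-1 : ℝ) ^ j * k ^ (2 * j) / (2 ^ (2 * j) * (Nat.factorial j : ℝ) ^ 2)) (J0 k) := by
  have hseries := (hasSum_intervalIntegral_cos_mul (f := cos) (a := 0) (b := π) (C := 1)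
    continuous_cos.aestronglyMeasurable (fun x _ => abs_cos_le_one x) k).mul_left (1 / π)
  refine hseries.congr_fun fun j => ?_
  rw [integral_cos_pow_two_mul]
  field_simp
end

section
/- For every u > 0, every s ∈ ℝ, and every family of nonnegative reals (c_k) indexed by the nonzero elements k of ℤ², one has Σ_{k ≠ 0} (J⁰(‖k‖·u))² · (1 + ‖k‖²)^{s + 1/2} · c_k ≤ (√2 / u) · Σ_{k ≠ 0} (1 + ‖k‖²)^s · c_k (sums taken as tsums in [0,∞]). This is the Fourier-coefficient form of the smoothing estimate ‖J⁰_u Φ‖_{H^{s+1/2}} ≤ 2^{1/4} u^{-1/2} ‖Φ‖_{H^s} for mean-zero Φ on the torus 𝕋². -/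
open MeasureTheory Real ENNReal

/-- The Euclidean norm of `k ∈ ℤ²`. -/
noncomputable def eNorm (k : ℤ × ℤ) : ℝ :=
  Real.sqrt ((k.1 : ℝ) ^ 2 + (k.2 : ℝ) ^ 2)

/-! Since `√(1 + ‖k‖²) ≤ √2 ‖k‖` for `k ≠ 0`, everything reduces to the pointwise bound
`x J⁰(x)² ≤ 1` for `x > 0`. For `x ≤ 4` it follows from the power series of `J⁰`, whose partial
sums alternately bound it from above and below because those of `cos` do. For `x = y² ≥ 4` the
substitution `cos θ = 1 - v²` gives `π J⁰(x) = 2√2 ∫₀¹ cos(x(1 - v²)) / √(1 - v²/2) dv`.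
Replacing the weight by `1` costs `O(1/x)` after one integration by parts, and what remains is
`y⁻¹ ∫₀^y cos(y² - t²) dt`, which is at most `0.977 / y`: on `[0, 2]` by explicit bounds on the
Fresnel integrals, on `[2, y]` by two integrations by parts. -/

open Finset Nat

noncomputable def cosTaylor (n : ℕ) (t : ℝ) : ℝ :=
  ∑ m ∈ range n, (-1) ^ m * t ^ (2 * m) / (2 * m)!

noncomputable def sinTaylor (n : ℕ) (t : ℝ) : ℝ :=
  ∑ m ∈ range n, (-1) ^ m * t ^ (2 * m + 1) / (2 * m + 1)!

theorem continuous_cosTaylor (n : ℕ) : Continuous (cosTaylor n) := by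
  unfold cosTaylor; fun_prop

theorem continuous_sinTaylor (n : ℕ) : Continuous (sinTaylor n) := by
  unfold sinTaylor; fun_prop

theorem hasDerivAt_sinTaylor (n : ℕ) (t : ℝ) : HasDerivAt (sinTaylor n) (cosTaylor n t) t := by
  unfold sinTaylor cosTaylor
  refine (HasDerivAt.fun_sum fun m _ =>
    ((hasDerivAt_pow (2 * m + 1) t).const_mul ((-1 : ℝ) ^ m)).div_const _).congr_deriv
    (sum_congr rfl fun m _ => ?_)
  rw [Nat.add_sub_cancel, factorial_succ]
  push_cast
  field_simp

theorem hasDerivAt_cosTaylor_succ (n : ℕ) (t : ℝ) :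
    HasDerivAt (cosTaylor (n + 1)) (-sinTaylor n t) t := by
  have h : cosTaylor (n + 1) = fun t => 1 + ∑ m ∈ range n,
      (-1 : ℝ) ^ (m + 1) * t ^ (2 * (m + 1)) / (2 * (m + 1))! := by
    funext t; rw [cosTaylor, sum_range_succ']; simp [add_comm]
  rw [h, sinTaylor, ← sum_neg_distrib]
  refine ((HasDerivAt.fun_sum fun m _ =>
    ((hasDerivAt_pow (2 * (m + 1)) t).const_mul ((-1 : ℝ) ^ (m + 1))).div_const _).const_add
      1).congr_deriv (sum_congr rfl fun m _ => ?_)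
  rw [show 2 * (m + 1) = 2 * m + 1 + 1 by ring, Nat.add_sub_cancel, factorial_succ]
  push_cast
  field_simp
  ring

theorem cosTaylor_neg (n : ℕ) (t : ℝ) : cosTaylor n (-t) = cosTaylor n t := by
  simp only [cosTaylor, pow_mul, neg_sq]

theorem nonneg_of_hasDerivAt_of_nonneg {f f' : ℝ → ℝ} (hf : ∀ x, HasDerivAt f (f' x) x)
    (hf₀ : f 0 = 0) (hf' : ∀ x, 0 ≤ x → 0 ≤ f' x) {t : ℝ} (ht : 0 ≤ t) : 0 ≤ f t := by
  have hmono : MonotoneOn f (Set.Ici 0) := by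
    refine monotoneOn_of_deriv_nonneg (convex_Ici 0)
      (fun x _ => (hf x).continuousAt.continuousWithinAt)
      (fun x _ => (hf x).differentiableAt.differentiableWithinAt) fun x hx => ?_
    rw [interior_Ici] at hx
    exact (hf x).deriv ▸ hf' x hx.le
  simpa [hf₀] using hmono Set.self_mem_Ici (Set.mem_Ici.mpr ht) ht

/-- Each error term is the integral of the previous one, which makes the Taylor polynomials of
`cos` and `sin` alternately over- and underestimate them on `[0, ∞)`. -/
theorem cos_sin_sub_taylor_alternating (n : ℕ) {t : ℝ} (ht : 0 ≤ t) :
    0 ≤ (-1) ^ (n + 1) * (cos t - cosTaylor (n + 1) t) ∧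
      0 ≤ (-1) ^ (n + 1) * (sin t - sinTaylor (n + 1) t) := by
  induction n generalizing t with
  | zero =>
    simp only [cosTaylor, sinTaylor, zero_add, pow_one, range_one, sum_singleton]
    norm_num
    exact ⟨cos_le_one t, sin_le ht⟩
  | succ n ih =>
    have hcos : ∀ t, 0 ≤ t → 0 ≤ (-1) ^ (n + 2) * (cos t - cosTaylor (n + 2) t) := by
      refine fun t ht => nonneg_of_hasDerivAt_of_nonneg
        (f := fun t => (-1) ^ (n + 2) * (cos t - cosTaylor (n + 2) t)) (fun x => ?_) ?_
        (fun x hx => (ih hx).2) ht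
      · refine (((hasDerivAt_cos x).sub (hasDerivAt_cosTaylor_succ (n + 1) x)).const_mul
          _).congr_deriv ?_
        rw [pow_succ]; ring
      · simp [cosTaylor, sum_range_succ']
    refine ⟨hcos t ht, nonneg_of_hasDerivAt_of_nonneg
      (f := fun t => (-1) ^ (n + 2) * (sin t - sinTaylor (n + 2) t)) (fun x => ?_) ?_ hcos ht⟩
    · exact ((hasDerivAt_sin x).sub (hasDerivAt_sinTaylor (n + 2) x)).const_mul _
    · simp [sinTaylor]

theorem cos_le_cosTaylor (j : ℕ) (t : ℝ) : cos t ≤ cosTaylor (2 * j + 1) t := by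
  wlog ht : 0 ≤ t
  · simpa [cosTaylor_neg] using this j (-t) (by linarith)
  have := (cos_sin_sub_taylor_alternating (2 * j) ht).1
  rw [Odd.neg_one_pow ⟨j, rfl⟩] at this
  linarith

theorem cosTaylor_le_cos (j : ℕ) (t : ℝ) : cosTaylor (2 * j + 2) t ≤ cos t := by
  wlog ht : 0 ≤ t
  · simpa [cosTaylor_neg] using this j (-t) (by linarith)
  have : 0 ≤ (-1) ^ (2 * j + 2) * (cos t - cosTaylor (2 * j + 2) t) :=
    (cos_sin_sub_taylor_alternating (2 * j + 1) ht).1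
  rw [Even.neg_one_pow ⟨j + 1, by ring⟩] at this
  linarith

theorem sin_le_sinTaylor (j : ℕ) {t : ℝ} (ht : 0 ≤ t) : sin t ≤ sinTaylor (2 * j + 1) t := by
  have := (cos_sin_sub_taylor_alternating (2 * j) ht).2
  rw [Odd.neg_one_pow ⟨j, rfl⟩] at this
  linarith

theorem sinTaylor_le_sin (j : ℕ) {t : ℝ} (ht : 0 ≤ t) : sinTaylor (2 * j + 2) t ≤ sin t := by
  have : 0 ≤ (-1) ^ (2 * j + 2) * (sin t - sinTaylor (2 * j + 2) t) :=
    (cos_sin_sub_taylor_alternating (2 * j + 1) ht).2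
  rw [Even.neg_one_pow ⟨j + 1, by ring⟩] at this
  linarith

theorem integral_cos_pow_even_zero_pi (m : ℕ) :
    ∫ θ in (0 : ℝ)..π, cos θ ^ (2 * m) = π * (2 * m)! / (4 ^ m * (m ! : ℝ) ^ 2) := by
  induction m with
  | zero => simp
  | succ m ih =>
    rw [show 2 * (m + 1) = 2 * m + 2 by ring, integral_cos_pow, ih, factorial_succ,
      factorial_succ (2 * m), factorial_succ m]
    simp only [sin_pi, sin_zero, mul_zero, sub_zero, zero_div, zero_add]
    push_cast
    field_simp
    ring

noncomputable def J0Taylor (n : ℕ) (x : ℝ) : ℝ :=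
  ∑ m ∈ range n, (-1) ^ m * (x / 2) ^ (2 * m) / (m ! : ℝ) ^ 2

theorem pi_mul_J0 (x : ℝ) : π * J0 x = ∫ θ in (0 : ℝ)..π, cos (x * cos θ) := by
  rw [J0]
  field_simp

theorem integral_cosTaylor_mul_cos (n : ℕ) (x : ℝ) :
    ∫ θ in (0 : ℝ)..π, cosTaylor n (x * cos θ) = π * J0Taylor n x := by
  simp only [cosTaylor, J0Taylor, mul_sum]
  rw [intervalIntegral.integral_finsetSum fun m _ =>
    by apply Continuous.intervalIntegrable; fun_prop]
  refine sum_congr rfl fun m _ => ?_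
  simp only [mul_pow, mul_div_right_comm _ (cos _ ^ _), ← mul_assoc]
  rw [intervalIntegral.integral_const_mul, integral_cos_pow_even_zero_pi, div_pow,
    pow_mul (2 : ℝ)]
  have : ((2 * m)! : ℝ) ≠ 0 := by positivity
  field_simp
  norm_num

theorem J0_le_J0Taylor (j : ℕ) (x : ℝ) : J0 x ≤ J0Taylor (2 * j + 1) x := by
  refine le_of_mul_le_mul_left ?_ pi_pos
  rw [pi_mul_J0, ← integral_cosTaylor_mul_cos]
  refine intervalIntegral.integral_mono_on pi_pos.le
    (Continuous.intervalIntegrable (by fun_prop) _ _)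
    (((continuous_cosTaylor _).comp (by fun_prop)).intervalIntegrable _ _)
    fun θ _ => cos_le_cosTaylor j _

theorem J0Taylor_le_J0 (j : ℕ) (x : ℝ) : J0Taylor (2 * j + 2) x ≤ J0 x := by
  refine le_of_mul_le_mul_left ?_ pi_pos
  rw [pi_mul_J0, ← integral_cosTaylor_mul_cos]
  refine intervalIntegral.integral_mono_on pi_pos.le
    (((continuous_cosTaylor _).comp (by fun_prop)).intervalIntegrable _ _)
    (Continuous.intervalIntegrable (by fun_prop) _ _)
    fun θ _ => cosTaylor_le_cos j _

theorem abs_J0_le_one (x : ℝ) : |J0 x| ≤ 1 := by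
  have h := intervalIntegral.norm_integral_le_of_norm_le_const (a := 0) (b := π) (C := 1)
    (f := fun θ => cos (x * cos θ)) fun θ _ => by simpa using abs_cos_le_one _
  rw [← pi_mul_J0, sub_zero, one_mul, Real.norm_eq_abs, abs_mul, abs_of_pos pi_pos] at h
  exact le_of_mul_le_mul_left (h.trans_eq (mul_one π).symm) pi_pos

theorem mul_sq_le_one_of_abs_le {x b J M : ℝ} (hx : 0 ≤ x) (hxb : x ≤ b) (hJ : |J| ≤ M)
    (hbM : b * M ^ 2 ≤ 1) : x * J ^ 2 ≤ 1 := by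
  have hJM : J ^ 2 ≤ M ^ 2 := sq_le_sq' (abs_le.mp hJ).1 (abs_le.mp hJ).2
  nlinarith [sq_nonneg J]

theorem J0_le_J0Taylor_three (x : ℝ) : J0 x ≤ 1 - x ^ 2 / 4 + x ^ 4 / 64 :=
  (J0_le_J0Taylor 1 x).trans_eq (by norm_num [J0Taylor, sum_range_succ]; ring)

theorem J0Taylor_four_le_J0 (x : ℝ) : 1 - x ^ 2 / 4 + x ^ 4 / 64 - x ^ 6 / 2304 ≤ J0 x :=
  (J0Taylor_le_J0 1 x).trans_eq' (by norm_num [J0Taylor, sum_range_succ, factorial]; ring)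

theorem J0_le_J0Taylor_seven (x : ℝ) : J0 x ≤
    1 - x ^ 2 / 4 + x ^ 4 / 64 - x ^ 6 / 2304 + x ^ 8 / 147456 - x ^ 10 / 14745600
      + x ^ 12 / 2123366400 :=
  (J0_le_J0Taylor 3 x).trans_eq (by norm_num [J0Taylor, sum_range_succ, factorial]; ring)

theorem J0Taylor_eight_le_J0 (x : ℝ) :
    1 - x ^ 2 / 4 + x ^ 4 / 64 - x ^ 6 / 2304 + x ^ 8 / 147456 - x ^ 10 / 14745600
      + x ^ 12 / 2123366400 - x ^ 14 / 416179814400 ≤ J0 x :=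
  (J0Taylor_le_J0 3 x).trans_eq' (by norm_num [J0Taylor, sum_range_succ, factorial]; ring)

theorem abs_J0_le_of_mem_Icc_one {x : ℝ} (hx : x ∈ Set.Icc 1 (17 / 10)) : |J0 x| ≤ 49 / 64 := by
  obtain ⟨h₁, h₂⟩ := hx
  have hz₁ : 1 ≤ x ^ 2 := by nlinarith
  have hz₂ : x ^ 2 ≤ 289 / 100 := by nlinarith
  refine abs_le.mpr ⟨?_, ?_⟩
  · refine le_trans ?_ (J0Taylor_four_le_J0 x)
    nlinarith [sq_nonneg (x ^ 2 - 2), pow_le_pow_left₀ (by positivity : (0 : ℝ) ≤ x ^ 2) hz₂ 3]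
  · refine (J0_le_J0Taylor_three x).trans ?_
    nlinarith [mul_nonneg (sub_nonneg.mpr hz₁) (sub_nonneg.mpr (show x ^ 2 ≤ 15 by nlinarith))]

theorem abs_J0_le_of_mem_Icc_seventeen_tenths {x : ℝ} (hx : x ∈ Set.Icc (17 / 10) (5 / 2)) :
    |J0 x| ≤ 41 / 100 := by
  obtain ⟨h₁, h₂⟩ := hx
  have hz₁ : 289 / 100 ≤ x ^ 2 := by nlinarith
  have hz₂ : x ^ 2 ≤ 25 / 4 := by nlinarith
  refine abs_le.mpr ⟨?_, ?_⟩
  · refine le_trans ?_ (J0Taylor_four_le_J0 x)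
    nlinarith [mul_nonneg (sub_nonneg.mpr hz₁) (sub_nonneg.mpr hz₂),
      mul_nonneg (mul_nonneg (sub_nonneg.mpr hz₁) (sub_nonneg.mpr hz₂)) (sub_nonneg.mpr hz₂),
      sq_nonneg (x ^ 2 - 5)]
  · refine (J0_le_J0Taylor_three x).trans ?_
    nlinarith [mul_nonneg (sub_nonneg.mpr hz₁) (sub_nonneg.mpr (show x ^ 2 ≤ 13 by nlinarith))]

theorem abs_J0_le_of_mem_Icc_five_halves {x : ℝ} (hx : x ∈ Set.Icc (5 / 2) 4) :
    |J0 x| ≤ 1 / 2 := by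
  obtain ⟨h₁, h₂⟩ := hx
  have hz₁ : 25 / 4 ≤ x ^ 2 := by nlinarith
  have hz₂ : x ^ 2 ≤ 16 := by nlinarith
  have hz := mul_nonneg (sub_nonneg.mpr hz₁) (sub_nonneg.mpr hz₂)
  refine abs_le.mpr ⟨?_, ?_⟩
  · refine le_trans ?_ (J0Taylor_eight_le_J0 x)
    nlinarith [sq_nonneg (x ^ 2 - 10), sq_nonneg (x ^ 2 - 14),
      mul_nonneg hz (sq_nonneg (x ^ 2 - 10)), mul_nonneg hz (sq_nonneg (x ^ 2 - 14)),
      pow_le_pow_left₀ (by positivity : (0 : ℝ) ≤ x ^ 2) hz₂ 3,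
      pow_le_pow_left₀ (by positivity : (0 : ℝ) ≤ x ^ 2) hz₂ 5,
      pow_le_pow_left₀ (by positivity : (0 : ℝ) ≤ x ^ 2) hz₂ 7]
  · refine (J0_le_J0Taylor_seven x).trans ?_
    nlinarith [sq_nonneg (x ^ 2 - 10), sq_nonneg (x ^ 2 - 14), sq_nonneg x,
      mul_nonneg hz (sq_nonneg (x ^ 2 - 10)),
      pow_le_pow_left₀ (by positivity : (0 : ℝ) ≤ x ^ 2) hz₂ 3]

theorem mul_J0_sq_le_one_of_le_four {x : ℝ} (hx : x ≤ 4) : x * J0 x ^ 2 ≤ 1 := by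
  rcases le_or_gt x 0 with h₀ | h₀
  · nlinarith [sq_nonneg (J0 x)]
  rcases le_or_gt x 1 with h₁ | h₁
  · exact mul_sq_le_one_of_abs_le h₀.le h₁ (abs_J0_le_one x) (by norm_num)
  rcases le_or_gt x (17 / 10) with h₂ | h₂
  · exact mul_sq_le_one_of_abs_le h₀.le h₂ (abs_J0_le_of_mem_Icc_one ⟨h₁.le, h₂⟩) (by norm_num)
  rcases le_or_gt x (5 / 2) with h₃ | h₃
  · exact mul_sq_le_one_of_abs_le h₀.le h₃
      (abs_J0_le_of_mem_Icc_seventeen_tenths ⟨h₂.le, h₃⟩) (by norm_num)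
  · exact mul_sq_le_one_of_abs_le h₀.le hx (abs_J0_le_of_mem_Icc_five_halves ⟨h₃.le, hx⟩)
      (by norm_num)

theorem abs_integral_mul_deriv_sub_le {a b : ℝ} {g g' F f : ℝ → ℝ} (hab : a ≤ b)
    (hg : ∀ t ∈ Set.Icc a b, HasDerivAt g (g' t) t) (hg' : ContinuousOn g' (Set.Icc a b))
    (hg'₀ : ∀ t ∈ Set.Icc a b, 0 ≤ g' t)
    (hF : ∀ t ∈ Set.Icc a b, HasDerivAt F (f t) t) (hf : ContinuousOn f (Set.Icc a b))
    (hF₁ : ∀ t ∈ Set.Icc a b, |F t| ≤ 1) :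
    |(∫ t in a..b, g t * f t) - (g b * F b - g a * F a)| ≤ g b - g a := by
  rw [← Set.uIcc_of_le hab] at hg hg' hF hf
  have hFc : ContinuousOn F (Set.uIcc a b) := fun t ht => (hF t ht).continuousAt.continuousWithinAt
  rw [intervalIntegral.integral_mul_deriv_eq_deriv_mul hg hF (hg'.intervalIntegrable)
    (hf.intervalIntegrable), sub_sub_cancel_left, abs_neg,
    ← intervalIntegral.integral_eq_sub_of_hasDerivAt hg hg'.intervalIntegrable]
  refine (intervalIntegral.abs_integral_le_integral_abs hab).trans
    (intervalIntegral.integral_mono_on hab ((hg'.mul hFc).abs.intervalIntegrable)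
      hg'.intervalIntegrable fun t ht => ?_)
  rw [abs_mul, abs_of_nonneg (hg'₀ t ht)]
  exact mul_le_of_le_one_right (hg'₀ t ht) (hF₁ t ht)

theorem integral_cos_mul_cos_eq_two_mul (x : ℝ) :
    ∫ θ in (0 : ℝ)..π, cos (x * cos θ) = 2 * ∫ θ in (0 : ℝ)..π / 2, cos (x * cos θ) := by
  have hi : ∀ a b : ℝ, IntervalIntegrable (fun θ => cos (x * cos θ)) volume a b :=
    fun a b => Continuous.intervalIntegrable (by fun_prop) a b
  have hreflect : ∫ θ in π / 2..π, cos (x * cos θ) = ∫ θ in (0 : ℝ)..π / 2, cos (x * cos θ) := by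
    simpa [cos_pi_sub, show π - π / 2 = π / 2 by ring] using
      (intervalIntegral.integral_comp_sub_left (fun θ => cos (x * cos θ)) π
        (a := 0) (b := π / 2)).symm
  rw [← intervalIntegral.integral_add_adjacent_intervals (hi 0 (π / 2)) (hi (π / 2) π),
    hreflect, two_mul]

theorem sqrt_one_sub_sq_div_two_pos {v : ℝ} (hv : v ∈ Set.Icc (0 : ℝ) 1) :
    0 < √(1 - v ^ 2 / 2) :=
  sqrt_pos.mpr (by nlinarith [hv.1, hv.2])

/-- The substitution `cos θ = 1 - v²`. -/
theorem integral_cos_mul_cos_zero_pi_div_two (x : ℝ) :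
    ∫ θ in (0 : ℝ)..π / 2, cos (x * cos θ) =
      √2 * ∫ v in (0 : ℝ)..1, cos (x * (1 - v ^ 2)) / √(1 - v ^ 2 / 2) := by
  have hsub := intervalIntegral.integral_comp_mul_deriv'' (a := 0) (b := 1)
    (f := fun v => arccos (1 - v ^ 2)) (f' := fun v => √2 / √(1 - v ^ 2 / 2))
    (g := fun θ => cos (x * cos θ)) (by fun_prop) (fun v hv => ?_) ?_ (by fun_prop)
  · simp only [sub_zero, arccos_one, one_pow, sub_self, arccos_zero, zero_pow two_ne_zero] at hsub
    rw [← hsub, ← intervalIntegral.integral_const_mul]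
    refine intervalIntegral.integral_congr fun v hv => ?_
    rw [Set.uIcc_of_le zero_le_one] at hv
    simp only [Function.comp_apply]
    rw [cos_arccos (by nlinarith [hv.1, hv.2]) (by nlinarith [hv.1, hv.2])]
    ring
  · simp only [zero_le_one, min_eq_left, max_eq_right, Set.mem_Ioo] at hv
    refine HasDerivAt.hasDerivWithinAt ?_
    have hroot : √(1 - (1 - v ^ 2) ^ 2) = √2 * v * √(1 - v ^ 2 / 2) := by
      rw [show 1 - (1 - v ^ 2) ^ 2 = 2 * v ^ 2 * (1 - v ^ 2 / 2) by ring,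
        sqrt_mul (by positivity), sqrt_mul zero_le_two, sqrt_sq hv.1.le]
    have hm := sqrt_one_sub_sq_div_two_pos ⟨hv.1.le, hv.2.le⟩
    refine ((hasDerivAt_arccos (by nlinarith) (by nlinarith)).comp v
      ((hasDerivAt_pow 2 v).const_sub 1)).congr_deriv ?_
    rw [hroot]
    have h2 : √2 ^ 2 = 2 := sq_sqrt zero_le_two
    have hv0 := hv.1.ne'
    field_simp
    norm_num [h2]
  · rw [Set.uIcc_of_le zero_le_one]
    exact continuousOn_const.div (by fun_prop) fun v hv => (sqrt_one_sub_sq_div_two_pos hv).ne'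

theorem hasDerivAt_sqrt_one_sub_sq_div_two {v : ℝ} (hv : v ∈ Set.Icc (0 : ℝ) 1) :
    HasDerivAt (fun v => √(1 - v ^ 2 / 2)) (-v / (2 * √(1 - v ^ 2 / 2))) v :=
  ((((hasDerivAt_pow 2 v).div_const 2).const_sub 1).sqrt
    (by nlinarith [hv.1, hv.2])).congr_deriv (by field_simp; norm_num)

theorem abs_integral_mul_cos_mul_one_sub_sq_le {x : ℝ} {g g' : ℝ → ℝ}
    (hg : ∀ v ∈ Set.Icc (0 : ℝ) 1, HasDerivAt g (g' v) v) (hg' : ContinuousOn g' (Set.Icc 0 1))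
    (hg'₀ : ∀ v ∈ Set.Icc (0 : ℝ) 1, 0 ≤ g' v) (hg₀ : g 0 = 0) :
    |∫ v in (0 : ℝ)..1, g v * (2 * x * v * cos (x * (1 - v ^ 2)))| ≤ g 1 := by
  have hF : ∀ v ∈ Set.Icc (0 : ℝ) 1, HasDerivAt (fun v => -sin (x * (1 - v ^ 2)))
      (2 * x * v * cos (x * (1 - v ^ 2))) v := fun v _ =>
    ((hasDerivAt_sin _).comp v (((hasDerivAt_pow 2 v).const_sub 1).const_mul x)).neg.congr_deriv
      (by norm_num; ring)
  simpa [hg₀] using abs_integral_mul_deriv_sub_le zero_le_one hg hg' hg'₀ hF (by fun_prop)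
    (fun v _ => by simpa using abs_sin_le_one _)

theorem abs_integral_cos_div_sqrt_sub_cos_le {x : ℝ} (hx : 0 < x) :
    |∫ v in (0 : ℝ)..1, (cos (x * (1 - v ^ 2)) / √(1 - v ^ 2 / 2) - cos (x * (1 - v ^ 2)))| ≤
      5 / (24 * x) := by
  set m : ℝ → ℝ := fun v => √(1 - v ^ 2 / 2) with hm_def
  have hm₀ : ∀ v ∈ Set.Icc (0 : ℝ) 1, 0 < m v := fun v hv => sqrt_one_sub_sq_div_two_pos hv
  have hm_sq : ∀ v ∈ Set.Icc (0 : ℝ) 1, m v ^ 2 = 1 - v ^ 2 / 2 :=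
    fun v hv => sq_sqrt (by nlinarith [hv.1, hv.2])
  have hm : ∀ v ∈ Set.Icc (0 : ℝ) 1, HasDerivAt m (-v / (2 * m v)) v :=
    fun v hv => hasDerivAt_sqrt_one_sub_sq_div_two hv
  have hmc : Continuous m := by rw [hm_def]; fun_prop
  clear_value m
  -- `g v * (2 x v) = 1 / m v - 1`, and `g` is increasing because `m` decreases
  set g : ℝ → ℝ := fun v => v / (4 * x * (m v * (1 + m v))) with hg_def
  set g' : ℝ → ℝ := fun v =>
    (m v * (1 + m v) + v ^ 2 * (1 + 2 * m v) / (2 * m v)) / (4 * x * (m v * (1 + m v)) ^ 2)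
  have hg : ∀ v ∈ Set.Icc (0 : ℝ) 1, HasDerivAt g (g' v) v := fun v hv => by
    have := hm₀ v hv
    exact ((hasDerivAt_id' v).div (((hm v hv).fun_mul ((hm v hv).const_add 1)).const_mul (4 * x))
      (by positivity)).congr_deriv (by simp only [g']; field_simp; ring)
  have hg'c : ContinuousOn g' (Set.Icc 0 1) := by
    refine ContinuousOn.div ?_ (by fun_prop) fun v hv => by have := hm₀ v hv; positivity
    exact (by fun_prop : Continuous fun v => m v * (1 + m v)).continuousOn.add
      ((by fun_prop : Continuous fun v => v ^ 2 * (1 + 2 * m v)).continuousOn.div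
        (by fun_prop) fun v hv => by have := hm₀ v hv; positivity)
  have key := abs_integral_mul_cos_mul_one_sub_sq_le (x := x) hg hg'c
    (fun v hv => by have := hm₀ v hv; have := hv.1; positivity) (by simp [hg_def])
  have hint : ∫ v in (0 : ℝ)..1, g v * (2 * x * v * cos (x * (1 - v ^ 2))) =
      ∫ v in (0 : ℝ)..1, (cos (x * (1 - v ^ 2)) / √(1 - v ^ 2 / 2) - cos (x * (1 - v ^ 2))) := by
    refine intervalIntegral.integral_congr fun v hv => ?_
    rw [Set.uIcc_of_le zero_le_one] at hv
    have h₀ := hm₀ v hv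
    have h₂ := hm_sq v hv
    rw [show √(1 - v ^ 2 / 2) = m v by rw [hm_def], hg_def]
    field_simp
    linear_combination 4 * cos (x * (1 - v ^ 2)) * h₂
  rw [← hint]
  refine key.trans ?_
  have h₁ := hm_sq 1 (by norm_num)
  have h₀ := hm₀ 1 (by norm_num)
  have hD : 6 / 5 ≤ m 1 * (1 + m 1) := by nlinarith
  rw [hg_def, div_le_div_iff₀ (by positivity) (by positivity)]
  nlinarith

theorem integral_cos_sq_sub_sq_eq {a y : ℝ} (ha : 0 < a) (hay : a ≤ y) :
    ∫ t in a..y, cos (y ^ 2 - t ^ 2) =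
      sin (y ^ 2 - a ^ 2) / (2 * a) - ∫ t in a..y, sin (y ^ 2 - t ^ 2) / (2 * t ^ 2) := by
  have hpos : ∀ t ∈ Set.uIcc a y, 0 < t := fun t ht => by
    rw [Set.uIcc_of_le hay] at ht; linarith [ht.1]
  have hu : ∀ t ∈ Set.uIcc a y, HasDerivAt (fun t => -1 / (2 * t)) (1 / (2 * t ^ 2)) t :=
    fun t ht => by
      have := (hpos t ht).ne'
      exact ((hasDerivAt_const t (-1 : ℝ)).div ((hasDerivAt_id' t).const_mul 2)
        (by positivity)).congr_deriv (by field_simp; ring)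
  have hv : ∀ t ∈ Set.uIcc a y,
      HasDerivAt (fun t => sin (y ^ 2 - t ^ 2)) (-(2 * t) * cos (y ^ 2 - t ^ 2)) t :=
    fun t _ => ((hasDerivAt_sin _).comp t ((hasDerivAt_pow 2 t).const_sub (y ^ 2))).congr_deriv
      (by norm_num; ring)
  have hu' : ContinuousOn (fun t => 1 / (2 * t ^ 2)) (Set.uIcc a y) :=
    continuousOn_const.div (by fun_prop) fun t ht => by have := hpos t ht; positivity
  have h := intervalIntegral.integral_mul_deriv_eq_deriv_mul hu hv hu'.intervalIntegrable
    (by apply Continuous.intervalIntegrable; fun_prop)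
  have hlhs : ∫ t in a..y, -1 / (2 * t) * (-(2 * t) * cos (y ^ 2 - t ^ 2)) =
      ∫ t in a..y, cos (y ^ 2 - t ^ 2) :=
    intervalIntegral.integral_congr fun t ht => by
      have := (hpos t ht).ne'
      field_simp
  have hrhs : ∫ t in a..y, 1 / (2 * t ^ 2) * sin (y ^ 2 - t ^ 2) =
      ∫ t in a..y, sin (y ^ 2 - t ^ 2) / (2 * t ^ 2) :=
    intervalIntegral.integral_congr fun t _ => by ring
  rw [hlhs, hrhs, sub_self, sin_zero, mul_zero, zero_sub] at h
  rw [h]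
  ring

theorem abs_integral_sin_sq_sub_sq_div_le {a y : ℝ} (ha : 0 < a) (hay : a ≤ y) :
    |∫ t in a..y, sin (y ^ 2 - t ^ 2) / (2 * t ^ 2)| ≤ 1 / (2 * a ^ 3) := by
  have hpos : ∀ t ∈ Set.Icc a y, 0 < t := fun t ht => ha.trans_le ht.1
  have hg : ∀ t ∈ Set.Icc a y, HasDerivAt (fun t => -1 / (4 * t ^ 3)) (3 / (4 * t ^ 4)) t :=
    fun t ht => by
      have := (hpos t ht).ne'
      exact ((hasDerivAt_const t (-1 : ℝ)).div ((hasDerivAt_pow 3 t).const_mul 4)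
        (by positivity)).congr_deriv (by field_simp; ring)
  have hF : ∀ t ∈ Set.Icc a y,
      HasDerivAt (fun t => cos (y ^ 2 - t ^ 2)) (2 * t * sin (y ^ 2 - t ^ 2)) t :=
    fun t _ => ((hasDerivAt_cos _).comp t ((hasDerivAt_pow 2 t).const_sub (y ^ 2))).congr_deriv
      (by norm_num; ring)
  have key := abs_integral_mul_deriv_sub_le hay hg
    (continuousOn_const.div (by fun_prop) fun t ht => by have := hpos t ht; positivity)
    (fun t ht => by have := hpos t ht; positivity) hF (by fun_prop)
    (fun t _ => abs_cos_le_one _)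
  have hint : ∫ t in a..y, -1 / (4 * t ^ 3) * (2 * t * sin (y ^ 2 - t ^ 2)) =
      -∫ t in a..y, sin (y ^ 2 - t ^ 2) / (2 * t ^ 2) := by
    rw [← intervalIntegral.integral_neg]
    refine intervalIntegral.integral_congr fun t ht => ?_
    have := (hpos t (by rwa [Set.uIcc_of_le hay] at ht)).ne'
    field_simp
    ring
  rw [hint, sub_self, cos_zero, mul_one] at key
  simp only [neg_div] at key
  obtain ⟨hb₁, hb₂⟩ := abs_le.mp key
  obtain ⟨hc₁, hc₂⟩ := abs_le.mp (abs_cos_le_one (y ^ 2 - a ^ 2))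
  have hA : 0 < 1 / (4 * a ^ 3) := by positivity
  have hY : 0 < 1 / (4 * y ^ 3) := by have := ha.trans_le hay; positivity
  have hYA : 1 / (4 * y ^ 3) ≤ 1 / (4 * a ^ 3) := by gcongr
  have e : 1 / (2 * a ^ 3) = 2 * (1 / (4 * a ^ 3)) := by ring
  rw [e, abs_le]
  constructor <;> nlinarith [mul_le_mul_of_nonneg_left hc₁ hA.le,
    mul_le_mul_of_nonneg_left hc₂ hA.le]

theorem integral_cosTaylor_sq (n : ℕ) (b : ℝ) :
    ∫ t in (0 : ℝ)..b, cosTaylor n (t ^ 2) =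
      ∑ m ∈ range n, (-1) ^ m * b ^ (4 * m + 1) / ((4 * m + 1) * (2 * m)!) := by
  simp only [cosTaylor]
  rw [intervalIntegral.integral_finsetSum fun m _ =>
    by apply Continuous.intervalIntegrable; fun_prop]
  refine sum_congr rfl fun m _ => ?_
  simp only [← pow_mul, mul_div_right_comm _ (_ ^ _)]
  rw [intervalIntegral.integral_const_mul, integral_pow, show 2 * (2 * m) = 4 * m by ring]
  push_cast
  rw [zero_pow (by omega), sub_zero]
  field_simp

theorem integral_sinTaylor_sq (n : ℕ) (b : ℝ) :
    ∫ t in (0 : ℝ)..b, sinTaylor n (t ^ 2) =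
      ∑ m ∈ range n, (-1) ^ m * b ^ (4 * m + 3) / ((4 * m + 3) * (2 * m + 1)!) := by
  simp only [sinTaylor]
  rw [intervalIntegral.integral_finsetSum fun m _ =>
    by apply Continuous.intervalIntegrable; fun_prop]
  refine sum_congr rfl fun m _ => ?_
  simp only [← pow_mul, mul_div_right_comm _ (_ ^ _)]
  rw [intervalIntegral.integral_const_mul, integral_pow,
    show 2 * (2 * m + 1) + 1 = 4 * m + 3 by ring]
  push_cast
  rw [zero_pow (by omega), sub_zero]
  field_simp
  ring

theorem integral_cos_sq_zero_two_mem :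
    ∫ t in (0 : ℝ)..2, cos (t ^ 2) ∈ Set.Icc 0.4614 0.4617 := by
  have hc : IntervalIntegrable (fun t : ℝ => cos (t ^ 2)) volume 0 2 :=
    Continuous.intervalIntegrable (by fun_prop) _ _
  have hT : ∀ n, IntervalIntegrable (fun t : ℝ => cosTaylor n (t ^ 2)) volume 0 2 := fun n =>
    ((continuous_cosTaylor n).comp (by fun_prop)).intervalIntegrable _ _
  constructor
  · refine le_trans ?_ (intervalIntegral.integral_mono_on (by norm_num) (hT 8) hc
      fun t _ => cosTaylor_le_cos 3 _)
    rw [integral_cosTaylor_sq]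
    norm_num [sum_range_succ, factorial]
  · refine (intervalIntegral.integral_mono_on (by norm_num) hc (hT 7)
      fun t _ => cos_le_cosTaylor 3 _).trans ?_
    rw [integral_cosTaylor_sq]
    norm_num [sum_range_succ, factorial]

theorem integral_sin_sq_zero_two_mem :
    ∫ t in (0 : ℝ)..2, sin (t ^ 2) ∈ Set.Icc 0.8047 0.8049 := by
  have hs : IntervalIntegrable (fun t : ℝ => sin (t ^ 2)) volume 0 2 :=
    Continuous.intervalIntegrable (by fun_prop) _ _
  have hT : ∀ n, IntervalIntegrable (fun t : ℝ => sinTaylor n (t ^ 2)) volume 0 2 := fun n =>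
    ((continuous_sinTaylor n).comp (by fun_prop)).intervalIntegrable _ _
  constructor
  · refine le_trans ?_ (intervalIntegral.integral_mono_on (by norm_num) (hT 8) hs
      fun t _ => sinTaylor_le_sin 3 (sq_nonneg t))
    rw [integral_sinTaylor_sq]
    norm_num [sum_range_succ, factorial]
  · refine (intervalIntegral.integral_mono_on (by norm_num) hs (hT 7)
      fun t _ => sin_le_sinTaylor 3 (sq_nonneg t)).trans ?_
    rw [integral_sinTaylor_sq]
    norm_num [sum_range_succ, factorial]

theorem cos_four_mem : cos 4 ∈ Set.Icc (-0.6537) (-0.6536) := by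
  constructor
  · refine le_trans ?_ (cosTaylor_le_cos 4 4)
    norm_num [cosTaylor, sum_range_succ, factorial]
  · refine (cos_le_cosTaylor 4 4).trans ?_
    norm_num [cosTaylor, sum_range_succ, factorial]

theorem sin_four_mem : sin 4 ∈ Set.Icc (-0.7569) (-0.7567) := by
  constructor
  · refine le_trans ?_ (sinTaylor_le_sin 3 (by norm_num : (0 : ℝ) ≤ 4))
    norm_num [sinTaylor, sum_range_succ, factorial]
  · refine (sin_le_sinTaylor 4 (by norm_num : (0 : ℝ) ≤ 4)).trans ?_
    norm_num [sinTaylor, sum_range_succ, factorial]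

theorem abs_integral_cos_sub_sq_add_le (x : ℝ) :
    |(∫ t in (0 : ℝ)..2, cos (x - t ^ 2)) + sin (x - 4) / 4| ≤ 0.9142 := by
  set a := (∫ t in (0 : ℝ)..2, cos (t ^ 2)) - sin 4 / 4 with ha
  set b := (∫ t in (0 : ℝ)..2, sin (t ^ 2)) + cos 4 / 4 with hb
  have hab : (∫ t in (0 : ℝ)..2, cos (x - t ^ 2)) + sin (x - 4) / 4 = cos x * a + sin x * b := by
    simp only [cos_sub, sin_sub, a, b]
    rw [intervalIntegral.integral_add (Continuous.intervalIntegrable (by fun_prop) _ _)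
      (Continuous.intervalIntegrable (by fun_prop) _ _), intervalIntegral.integral_const_mul,
      intervalIntegral.integral_const_mul]
    ring
  obtain ⟨hC₁, hC₂⟩ := integral_cos_sq_zero_two_mem
  obtain ⟨hS₁, hS₂⟩ := integral_sin_sq_zero_two_mem
  obtain ⟨hc₁, hc₂⟩ := cos_four_mem
  obtain ⟨hs₁, hs₂⟩ := sin_four_mem
  have hsq : a ^ 2 + b ^ 2 ≤ 0.9142 ^ 2 := by
    have : 0.6505 ≤ a ∧ a ≤ 0.651 ∧ 0.6412 ≤ b ∧ b ≤ 0.6415 := by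
      refine ⟨?_, ?_, ?_, ?_⟩ <;> linarith
    nlinarith
  rw [hab]
  refine abs_le_of_sq_le_sq' ?_ (by norm_num) |> abs_le.mpr
  nlinarith [sq_nonneg (a * sin x - b * cos x), sin_sq_add_cos_sq x]

theorem abs_integral_cos_sq_sub_sq_le {y : ℝ} (hy : 2 ≤ y) :
    |∫ t in (0 : ℝ)..y, cos (y ^ 2 - t ^ 2)| ≤ 0.977 := by
  have hi : ∀ a b : ℝ, IntervalIntegrable (fun t => cos (y ^ 2 - t ^ 2)) volume a b :=
    fun a b => Continuous.intervalIntegrable (by fun_prop) a b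
  rw [← intervalIntegral.integral_add_adjacent_intervals (hi 0 2) (hi 2 y),
    integral_cos_sq_sub_sq_eq two_pos hy]
  have hhead := abs_integral_cos_sub_sq_add_le (y ^ 2)
  have htail := abs_integral_sin_sq_sub_sq_div_le two_pos hy
  calc _ = |((∫ t in (0 : ℝ)..2, cos (y ^ 2 - t ^ 2)) + sin (y ^ 2 - 4) / 4) -
        ∫ t in (2 : ℝ)..y, sin (y ^ 2 - t ^ 2) / (2 * t ^ 2)| := by ring_nf
    _ ≤ 0.9142 + 1 / (2 * 2 ^ 3) := (abs_sub _ _).trans (add_le_add hhead htail)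
    _ ≤ 0.977 := by norm_num

theorem integral_cos_sq_mul_one_sub_sq {y : ℝ} (hy : y ≠ 0) :
    ∫ v in (0 : ℝ)..1, cos (y ^ 2 * (1 - v ^ 2)) =
      y⁻¹ * ∫ t in (0 : ℝ)..y, cos (y ^ 2 - t ^ 2) := by
  have h := intervalIntegral.integral_comp_mul_left (fun t => cos (y ^ 2 - t ^ 2)) hy
    (a := 0) (b := 1)
  simp only [mul_zero, mul_one, smul_eq_mul, mul_pow] at h
  rw [← h]
  ring_nf

theorem pi_mul_J0_eq (x : ℝ) : π * J0 x = 2 * √2 * ((∫ v in (0 : ℝ)..1, cos (x * (1 - v ^ 2))) +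
    ∫ v in (0 : ℝ)..1, (cos (x * (1 - v ^ 2)) / √(1 - v ^ 2 / 2) - cos (x * (1 - v ^ 2)))) := by
  have hc : IntervalIntegrable (fun v => cos (x * (1 - v ^ 2))) volume 0 1 :=
    Continuous.intervalIntegrable (by fun_prop) _ _
  have hw : IntervalIntegrable (fun v => cos (x * (1 - v ^ 2)) / √(1 - v ^ 2 / 2)) volume 0 1 := by
    refine ContinuousOn.intervalIntegrable ?_
    rw [Set.uIcc_of_le zero_le_one]
    exact (by fun_prop : Continuous _).continuousOn.div (by fun_prop)
      fun v hv => (sqrt_one_sub_sq_div_two_pos hv).ne'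
  rw [intervalIntegral.integral_sub hw hc, add_sub_cancel, pi_mul_J0,
    integral_cos_mul_cos_eq_two_mul, integral_cos_mul_cos_zero_pi_div_two]
  ring

theorem sq_mul_J0_sq_le_one_of_two_le {y : ℝ} (hy : 2 ≤ y) : y ^ 2 * J0 (y ^ 2) ^ 2 ≤ 1 := by
  have hy₀ : 0 < y := by linarith
  have hmain : |∫ v in (0 : ℝ)..1, cos (y ^ 2 * (1 - v ^ 2))| ≤ 0.977 / y := by
    rw [integral_cos_sq_mul_one_sub_sq hy₀.ne', abs_mul, abs_inv, abs_of_pos hy₀, inv_mul_eq_div]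
    exact div_le_div_of_nonneg_right (abs_integral_cos_sq_sub_sq_le hy) hy₀.le
  have hcorr := abs_integral_cos_div_sqrt_sub_cos_le (pow_pos hy₀ 2)
  have hJ : π * |J0 (y ^ 2)| ≤ 2 * √2 * (0.977 / y + 5 / (24 * y ^ 2)) := by
    rw [← abs_of_pos pi_pos, ← abs_mul, pi_mul_J0_eq, abs_mul, abs_of_pos (by positivity)]
    exact mul_le_mul_of_nonneg_left ((abs_add_le _ _).trans (add_le_add hmain hcorr))
      (by positivity)
  have hyJ : y * |J0 (y ^ 2)| ≤ 1 := by
    have hsqrt : √2 < 1.4143 := (sqrt_lt' (by norm_num)).mpr (by norm_num)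
    have hinv : 5 / (24 * y) ≤ 5 / 48 := by
      rw [div_le_div_iff₀ (by positivity) (by norm_num)]; linarith
    have : π * (y * |J0 (y ^ 2)|) ≤ 2 * √2 * (0.977 + 5 / (24 * y)) := by
      calc π * (y * |J0 (y ^ 2)|) = y * (π * |J0 (y ^ 2)|) := by ring
        _ ≤ y * (2 * √2 * (0.977 / y + 5 / (24 * y ^ 2))) := by gcongr
        _ = 2 * √2 * (0.977 + 5 / (24 * y)) := by field_simp
    nlinarith [pi_gt_d2, sqrt_nonneg 2, abs_nonneg (J0 (y ^ 2))]
  nlinarith [sq_abs (J0 (y ^ 2)), mul_nonneg hy₀.le (abs_nonneg (J0 (y ^ 2)))]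

theorem mul_J0_sq_le_one (x : ℝ) : x * J0 x ^ 2 ≤ 1 := by
  rcases le_or_gt x 4 with hx | hx
  · exact mul_J0_sq_le_one_of_le_four hx
  · have hy : 2 ≤ √x := le_sqrt_of_sq_le (by linarith)
    simpa [sq_sqrt (by linarith : (0 : ℝ) ≤ x)] using sq_mul_J0_sq_le_one_of_two_le hy

theorem J0_sq_mul_sqrt_one_add_sq_le {u r : ℝ} (hu : 0 < u) (hr : 1 ≤ r) :
    J0 (r * u) ^ 2 * √(1 + r ^ 2) ≤ √2 / u := by
  have hr₀ : 0 < r := by linarith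
  have hJ : J0 (r * u) ^ 2 ≤ 1 / (r * u) := by
    rw [le_div_iff₀ (by positivity), mul_comm]
    exact mul_J0_sq_le_one _
  have hsqrt : √(1 + r ^ 2) ≤ √2 * r :=
    calc √(1 + r ^ 2) ≤ √(2 * r ^ 2) := sqrt_le_sqrt (by nlinarith)
      _ = √2 * r := by rw [sqrt_mul zero_le_two, sqrt_sq hr₀.le]
  calc J0 (r * u) ^ 2 * √(1 + r ^ 2) ≤ 1 / (r * u) * (√2 * r) :=
        mul_le_mul hJ hsqrt (sqrt_nonneg _) (by positivity)
    _ = √2 / u := by field_simp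

theorem one_le_eNorm {k : ℤ × ℤ} (hk : k ≠ 0) : 1 ≤ eNorm k := by
  obtain ⟨a, b⟩ := k
  have hab : a ≠ 0 ∨ b ≠ 0 := by
    by_contra! h
    exact hk (by simp [h.1, h.2])
  have hpos : 0 < a ^ 2 + b ^ 2 := by rcases hab with h | h <;> positivity
  exact one_le_sqrt.mpr (by exact_mod_cast hpos)

/-- Fourier-coefficient form of the smoothing estimate
`‖J⁰_u Φ‖_{H^{s+1/2}} ≤ 2^{1/4} u^{-1/2} ‖Φ‖_{H^s}` for mean-zero `Φ` on `𝕋²`: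
take `c k = |Φ̂(k)|²`. -/
theorem gyroaverage_smoothing (u : ℝ) (hu : 0 < u) (s : ℝ)
    (c : {k : ℤ × ℤ // k ≠ 0} → ℝ) (hc : ∀ k, 0 ≤ c k) :
    ∑' k : {k : ℤ × ℤ // k ≠ 0},
        ENNReal.ofReal ((J0 (eNorm k.1 * u)) ^ 2 * (1 + eNorm k.1 ^ 2) ^ (s + 1/2) * c k)
      ≤ ENNReal.ofReal (Real.sqrt 2 / u) *
        ∑' k : {k : ℤ × ℤ // k ≠ 0},
          ENNReal.ofReal ((1 + eNorm k.1 ^ 2) ^ s * c k) := by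
  rw [← ENNReal.tsum_mul_left]
  refine ENNReal.tsum_le_tsum fun k => ?_
  rw [← ENNReal.ofReal_mul (by positivity)]
  refine ENNReal.ofReal_le_ofReal ?_
  have hr₀ : 0 < 1 + eNorm k.1 ^ 2 := by positivity
  calc J0 (eNorm k.1 * u) ^ 2 * (1 + eNorm k.1 ^ 2) ^ (s + 1 / 2) * c k
      = J0 (eNorm k.1 * u) ^ 2 * √(1 + eNorm k.1 ^ 2) * ((1 + eNorm k.1 ^ 2) ^ s * c k) := by
        rw [rpow_add hr₀, sqrt_eq_rpow]; ring
    _ ≤ √2 / u * ((1 + eNorm k.1 ^ 2) ^ s * c k) :=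
        mul_le_mul_of_nonneg_right (J0_sq_mul_sqrt_one_add_sq_le hu (one_le_eNorm k.2))
          (mul_nonneg (rpow_nonneg hr₀.le _) (hc k))
end
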